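/- Let F : Set → Set be a functor, F̄ a lifting of F to nominal sets (so that the forgetful functor commutes with them). If a coalgebra c : C → F̄C in nominal sets has the property that the underlying Set-coalgebra c : C → FC is locally finite (every element lies in a finite subcoalgebra), then c : C → F̄C is locally orbit-finite (every element lies in an orbit-finite subcoalgebra closed under the group action). -/

import Mathlib

/-- The subgroup of finite (finitary) permutations of the set `𝕍` of atoms. -/
def FinPerm (𝕍 : Type*) : Subgroup (Equiv.Perm 𝕍) where
  carrier := {π | {a | π a ≠ a}.Finite}
  one_mem' := by simp
  mul_mem' := by
    intro π σ hπ hσ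
    apply Set.Finite.subset (hσ.union (hπ.preimage σ.injective.injOn))
    intro a ha
    by_cases h : σ a = a
    · right
      simp only [Set.mem_preimage, Set.mem_setOf_eq]
      simpa [Equiv.Perm.mul_apply, h] using ha
    · exact Or.inl h
  inv_mem' := by
    intro π hπ
    have : {a | π⁻¹ a ≠ a} = {a | π a ≠ a} := by
      ext a
      simp only [Set.mem_setOf_eq, not_iff_not]
      rw [Equiv.Perm.inv_eq_iff_eq, eq_comm]
    show ({a | π⁻¹ a ≠ a} : Set 𝕍).Finite
    rw [this]
    exact hπ

open CategoryTheory

/-!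
Saturate a finite subcoalgebra `S ∋ x` of the underlying `Set`-coalgebra under the group action.
The saturation `Q` is equivariant and has at most `|S|` orbits. It is again a subcoalgebra: for
`s ∈ S`, `c s` lies in `F S ⊆ F Q`, and since `F̄` lifts `F`, the equivariant subset
`F Q ⊆ F C` is closed under the action, so it contains `π • c s = c (π • s)`.
-/

namespace CategoryTheory.Functor

/-- `F S`, seen as a subset of `F C` through `F` of the inclusion `S ↪ C`. -/
def mapSubset (F : Type ⥤ Type) {C : Type} (S : Set C) : Set (F.obj C) :=
  Set.range (F.map (TypeCat.ofHom (fun q : S => (q : C))))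

theorem mapSubset_mono (F : Type ⥤ Type) {C : Type} {S Q : Set C} (h : S ⊆ Q) :
    F.mapSubset S ⊆ F.mapSubset Q := by
  rintro _ ⟨u, rfl⟩
  refine ⟨F.map (TypeCat.ofHom (Set.inclusion h)) u, ?_⟩
  rw [← Functor.map_comp_apply]
  rfl

end CategoryTheory.Functor

def IsSubcoalgebra {F : Type ⥤ Type} {C : Type} (c : C → F.obj C) (S : Set C) : Prop :=
  ∀ y ∈ S, c y ∈ F.mapSubset S

namespace MulAction

variable (G : Type*) {α : Type*} [Group G] [MulAction G α]

def saturation (S : Set α) : Set α :=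
  ⋃ s ∈ S, orbit G s

variable {G}

theorem subset_saturation (S : Set α) : S ⊆ saturation G S :=
  fun s hs => Set.mem_biUnion hs (mem_orbit_self s)

theorem smul_mem_saturation {S : Set α} (g : G) {q : α} (hq : q ∈ saturation G S) :
    g • q ∈ saturation G S := by
  obtain ⟨s, hs, h, rfl⟩ := Set.mem_iUnion₂.mp hq
  exact Set.mem_biUnion hs ⟨g * h, mul_smul g h s⟩

theorem exists_finset_orbit_of_mem_saturation {S : Set α} (hS : S.Finite) :
    ∃ T : Finset α, ∀ q ∈ saturation G S, ∃ t ∈ T, q ∈ orbit G t := by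
  refine ⟨hS.toFinset, fun q hq => ?_⟩
  obtain ⟨s, hs, hq⟩ := Set.mem_iUnion₂.mp hq
  exact ⟨s, hS.mem_toFinset.mpr hs, hq⟩

end MulAction

open MulAction

theorem IsSubcoalgebra.saturation {G : Type*} [Group G] {F : Type ⥤ Type} {C : Type}
    [MulAction G C] [MulAction G (F.obj C)] {c : C → F.obj C}
    (hc : ∀ (π : G) (x : C), c (π • x) = π • c x)
    (hlift : ∀ Q : Set C, (∀ (π : G), ∀ q ∈ Q, π • q ∈ Q) →
      ∀ (π : G) (t : F.obj C), t ∈ F.mapSubset Q → π • t ∈ F.mapSubset Q)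
    {S : Set C} (hS : IsSubcoalgebra c S) : IsSubcoalgebra c (saturation G S) := by
  intro y hy
  obtain ⟨s, hs, π, rfl⟩ := Set.mem_iUnion₂.mp hy
  rw [hc]
  exact hlift _ (fun g _ => smul_mem_saturation g) π (c s)
    (F.mapSubset_mono (subset_saturation S) (hS s hs))

theorem stmt10_general {𝕍 : Type} (F : Type ⥤ Type) {C : Type}
    [MulAction (FinPerm 𝕍) C] [MulAction (FinPerm 𝕍) (F.obj C)]
    (c : C → F.obj C)
    (hc : ∀ (π : FinPerm 𝕍) (x : C), c (π • x) = π • c x)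
    (hlift : ∀ Q : Set C, (∀ (π : FinPerm 𝕍), ∀ q ∈ Q, π • q ∈ Q) →
      ∀ (π : FinPerm 𝕍) (t : F.obj C), t ∈ Set.range (F.map (TypeCat.ofHom (fun q : Q => (q : C)))) →
        π • t ∈ Set.range (F.map (TypeCat.ofHom (fun q : Q => (q : C)))))
    (hlocfin : ∀ x : C, ∃ S : Set C, S.Finite ∧ x ∈ S ∧
      ∀ y ∈ S, c y ∈ Set.range (F.map (TypeCat.ofHom (fun q : S => (q : C))))) :
    ∀ x : C, ∃ Q : Set C, x ∈ Q ∧ (∀ (π : FinPerm 𝕍), ∀ q ∈ Q, π • q ∈ Q) ∧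
      (∃ T : Finset C, ∀ q ∈ Q, ∃ t ∈ T, q ∈ MulAction.orbit (FinPerm 𝕍) t) ∧
      ∀ y ∈ Q, c y ∈ Set.range (F.map (TypeCat.ofHom (fun q : Q => (q : C)))) := by
  intro x
  obtain ⟨S, hSfin, hxS, hSsub⟩ := hlocfin x
  exact ⟨saturation (FinPerm 𝕍) S, subset_saturation S hxS, fun π _ => smul_mem_saturation π,
    exists_finset_orbit_of_mem_saturation hSfin, IsSubcoalgebra.saturation hc hlift hSsub⟩

/-- Let `F̄` be a lifting of a `Set`-functor `F` to nominal sets (so the group acts on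
`F C`, the coalgebra structure `c` is equivariant, and `F` applied to equivariant subsets
is closed under the action). If the underlying `Set`-coalgebra `c : C → F C` is locally
finite, then `c : C → F̄ C` is locally orbit-finite: every element lies in an equivariant
orbit-finite subcoalgebra. -/
theorem stmt10 {𝕍 : Type} [Infinite 𝕍] (F : Type ⥤ Type) {C : Type}
    [MulAction (FinPerm 𝕍) C] [MulAction (FinPerm 𝕍) (F.obj C)]
    (hnom : ∀ x : C, ∃ S : Finset 𝕍, ∀ π : FinPerm 𝕍, (∀ a ∈ S, π • a = a) → π • x = x)
    (c : C → F.obj C)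
    (hc : ∀ (π : FinPerm 𝕍) (x : C), c (π • x) = π • c x)
    (hlift : ∀ Q : Set C, (∀ (π : FinPerm 𝕍), ∀ q ∈ Q, π • q ∈ Q) →
      ∀ (π : FinPerm 𝕍) (t : F.obj C), t ∈ Set.range (F.map (TypeCat.ofHom (fun q : Q => (q : C)))) →
        π • t ∈ Set.range (F.map (TypeCat.ofHom (fun q : Q => (q : C)))))
    (hlocfin : ∀ x : C, ∃ S : Set C, S.Finite ∧ x ∈ S ∧
      ∀ y ∈ S, c y ∈ Set.range (F.map (TypeCat.ofHom (fun q : S => (q : C))))) :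
    ∀ x : C, ∃ Q : Set C, x ∈ Q ∧ (∀ (π : FinPerm 𝕍), ∀ q ∈ Q, π • q ∈ Q) ∧
      (∃ T : Finset C, ∀ q ∈ Q, ∃ t ∈ T, q ∈ MulAction.orbit (FinPerm 𝕍) t) ∧
      ∀ y ∈ Q, c y ∈ Set.range (F.map (TypeCat.ofHom (fun q : Q => (q : C)))) :=
  stmt10_general F c hc hlift hlocfin
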